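/- Let R be a term rewrite system such that |MSDC(r)| = 1 for every rule ℓ → r ∈ R. Then pirc_R(n) = irc_R(n) for all n ∈ ℕ. -/

import Mathlib

namespace ParallelComplexity

/-! ## First-order terms -/

inductive Term (σ : Type) (V : Type) : Type where
  | var : V → Term σ V
  | fn : σ → List (Term σ V) → Term σ V

variable {σ V : Type}

mutual
  /-- Application of a substitution to a term. -/
  def Term.subst (θ : V → Term σ V) : Term σ V → Term σ V
    | Term.var x => θ x
    | Term.fn f ts => Term.fn f (Term.substList θ ts)
  def Term.substList (θ : V → Term σ V) : List (Term σ V) → List (Term σ V)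
    | [] => []
    | t :: ts => Term.subst θ t :: Term.substList θ ts
end

mutual
  /-- The size |t| of a term. -/
  def Term.size : Term σ V → ℕ
    | Term.var _ => 1
    | Term.fn _ ts => 1 + Term.sizeList ts
  def Term.sizeList : List (Term σ V) → ℕ
    | [] => 0
    | t :: ts => Term.size t + Term.sizeList ts
end

/-- Subterm `t|π` at a position (positions are lists of argument indices);
`none` if the position is not a position of `t`. -/
def Term.subtermAt : Term σ V → List ℕ → Option (Term σ V)
  | t, [] => some t
  | Term.var _, _ :: _ => none
  | Term.fn _ ts, i :: π =>
    match ts[i]? with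
    | none => none
    | some u => Term.subtermAt u π

/-- `t[s]π`: replacement of the subterm at position `π` by `s`. -/
def Term.replaceAt : Term σ V → List ℕ → Term σ V → Option (Term σ V)
  | _, [], s => some s
  | Term.var _, _ :: _, _ => none
  | Term.fn f ts, i :: π, s =>
    match ts[i]? with
    | none => none
    | some u =>
      match Term.replaceAt u π s with
      | none => none
      | some u' => some (Term.fn f (ts.set i u'))

def Term.isVar (t : Term σ V) : Prop := ∃ x, t = Term.var x

/-- `x` occurs as a variable in the term. -/
inductive Term.VarIn (x : V) : Term σ V → Prop
  | var : Term.VarIn x (Term.var x)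
  | fn {f : σ} {ts : List (Term σ V)} {t : Term σ V} :
      t ∈ ts → Term.VarIn x t → Term.VarIn x (Term.fn f ts)

/-! ## Term rewrite systems -/

structure Rule (σ V : Type) where
  lhs : Term σ V
  rhs : Term σ V

/-- A well-formed TRS: a finite set of rules `ℓ → r` with `ℓ ∉ V` and
`Var(r) ⊆ Var(ℓ)`. -/
def IsWfTRS (R : Set (Rule σ V)) : Prop :=
  R.Finite ∧ (∀ r ∈ R, ¬ r.lhs.isVar) ∧
    ∀ r ∈ R, ∀ x : V, Term.VarIn x r.rhs → Term.VarIn x r.lhs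

def IsRedex (R : Set (Rule σ V)) (t : Term σ V) : Prop :=
  ∃ r ∈ R, ∃ θ : V → Term σ V, t = Term.subst θ r.lhs

/-- An innermost redex: a redex none of whose proper subterms is a redex. -/
def IsInnermostRedex (R : Set (Rule σ V)) (t : Term σ V) : Prop :=
  IsRedex R t ∧
    ∀ π : List ℕ, π ≠ [] → ∀ u, t.subtermAt π = some u → ¬ IsRedex R u

/-- One rewrite step at position `π`. -/
def RewriteAt (R : Set (Rule σ V)) (π : List ℕ) (s t : Term σ V) : Prop :=
  ∃ r ∈ R, ∃ θ : V → Term σ V,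
    s.subtermAt π = some (Term.subst θ r.lhs) ∧
    s.replaceAt π (Term.subst θ r.rhs) = some t

/-- The rewrite relation `s →_R t`. -/
def Rewrite (R : Set (Rule σ V)) (s t : Term σ V) : Prop := ∃ π, RewriteAt R π s t

/-- The innermost rewrite relation `s →i t`. -/
def InnermostRewrite (R : Set (Rule σ V)) (s t : Term σ V) : Prop :=
  ∃ π, ∃ r ∈ R, ∃ θ : V → Term σ V,
    s.subtermAt π = some (Term.subst θ r.lhs) ∧
    IsInnermostRedex R (Term.subst θ r.lhs) ∧
    s.replaceAt π (Term.subst θ r.rhs) = some t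

def NormalForm (R : Set (Rule σ V)) (t : Term σ V) : Prop := ¬ ∃ u, Rewrite R t u

/-- Parallel-innermost rewriting `s ⇉ t`: `s →i⁺ t` and either
(a) `s` is an innermost redex and `s →i t`, or (b) `s = f(s₁,…,sₙ)`,
`t = f(t₁,…,tₙ)` and each `sₖ ⇉ tₖ` or `sₖ = tₖ` is a normal form. -/
inductive ParInnermost (R : Set (Rule σ V)) : Term σ V → Term σ V → Prop
  | redex {s t : Term σ V} :
      Relation.TransGen (InnermostRewrite R) s t →
      IsInnermostRedex R s → InnermostRewrite R s t → ParInnermost R s t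
  | congr (f : σ) (ss ts : List (Term σ V)) :
      Relation.TransGen (InnermostRewrite R) (Term.fn f ss) (Term.fn f ts) →
      ss.length = ts.length →
      -- each `sₖ ⇉ tₖ`, or `sₖ = tₖ` is a normal form (stated as the
      -- classically equivalent implication to satisfy the kernel's
      -- restrictions on nested inductive occurrences)
      (∀ p ∈ ss.zip ts, ¬ (p.1 = p.2 ∧ NormalForm R p.1) → ParInnermost R p.1 p.2) →
      ParInnermost R (Term.fn f ss) (Term.fn f ts)

/-! ## Abstract properties of relations -/

def Confluent {α : Type} (r : α → α → Prop) : Prop :=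
  ∀ s t u, Relation.ReflTransGen r s t → Relation.ReflTransGen r s u →
    ∃ v, Relation.ReflTransGen r t v ∧ Relation.ReflTransGen r u v

def Deterministic {α : Type} (r : α → α → Prop) : Prop :=
  ∀ s t u, r s t → r s u → t = u

def UniformlyConfluent {α : Type} (r : α → α → Prop) : Prop :=
  ∀ s t u, r s t → r s u → t = u ∨ ∃ v, r t v ∧ r u v

/-! ## Derivation height and runtime complexity -/

/-- `e`-th iterate of a relation. -/
def iterRel {α : Type} (r : α → α → Prop) : ℕ → α → α → Prop
  | 0 => fun a b => a = b
  | n + 1 => fun a c => ∃ b, r a b ∧ iterRel r n b c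

/-- Derivation height `Dh(t, →) = sup { e | ∃ t'. t →^e t' } ∈ ℕ ∪ {ω}`. -/
noncomputable def Dh {α : Type} (r : α → α → Prop) (t : α) : ℕ∞ :=
  sSup { e : ℕ∞ | ∃ n : ℕ, e = (n : ℕ∞) ∧ ∃ t', iterRel r n t t' }

/-- Defined symbols: root symbols of left-hand sides. -/
def Defined (R : Set (Rule σ V)) (f : σ) : Prop :=
  ∃ r ∈ R, ∃ ts : List (Term σ V), r.lhs = Term.fn f ts

def HasDefinedRoot (R : Set (Rule σ V)) (t : Term σ V) : Prop :=
  ∃ f ts, t = Term.fn f ts ∧ Defined R f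

/-- Constructor terms: terms over constructor symbols and variables. -/
inductive ConsTerm (R : Set (Rule σ V)) : Term σ V → Prop
  | var (x : V) : ConsTerm R (Term.var x)
  | fn (f : σ) (ts : List (Term σ V)) :
      ¬ Defined R f → (∀ t ∈ ts, ConsTerm R t) → ConsTerm R (Term.fn f ts)

/-- Basic terms: a defined symbol applied to constructor terms. -/
def BasicTerm (R : Set (Rule σ V)) (t : Term σ V) : Prop :=
  ∃ f ts, t = Term.fn f ts ∧ Defined R f ∧ ∀ u ∈ ts, ConsTerm R u

/-- Innermost runtime complexity. -/
noncomputable def irc (R : Set (Rule σ V)) (n : ℕ) : ℕ∞ :=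
  sSup { d : ℕ∞ | ∃ t, BasicTerm R t ∧ t.size ≤ n ∧ d = Dh (InnermostRewrite R) t }

/-- Parallel-innermost runtime complexity. -/
noncomputable def pirc (R : Set (Rule σ V)) (n : ℕ) : ℕ∞ :=
  sSup { d : ℕ∞ | ∃ t, BasicTerm R t ∧ t.size ≤ n ∧ d = Dh (ParInnermost R) t }

/-! ## Critical pairs -/

def RuleVars (r : Rule σ V) : Set V :=
  { x | Term.VarIn x r.lhs ∨ Term.VarIn x r.rhs }

/-- `r₂` is a variant of `r₁` (each is a substitution instance of the other). -/
def IsVariantOf (r₁ r₂ : Rule σ V) : Prop :=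
  ∃ θ₁ θ₂ : V → Term σ V,
    r₂.lhs = Term.subst θ₁ r₁.lhs ∧ r₂.rhs = Term.subst θ₁ r₁.rhs ∧
    r₁.lhs = Term.subst θ₂ r₂.lhs ∧ r₁.rhs = Term.subst θ₂ r₂.rhs

def Unifies (θ : V → Term σ V) (s t : Term σ V) : Prop :=
  Term.subst θ s = Term.subst θ t

def IsMGU (μ : V → Term σ V) (s t : Term σ V) : Prop :=
  Unifies μ s t ∧
    ∀ δ : V → Term σ V, Unifies δ s t →
      ∃ δ' : V → Term σ V, ∀ x : V, Term.subst δ' (μ x) = δ x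

/-- Critical pairs `⟨uσ[rσ]π, vσ⟩` of a TRS, from variable-renamed copies
`ℓ → r` and `u → v` of rules of `R` overlapping at a non-variable position
`π` of `u` (not a root overlap of variants of the same rule). -/
def CriticalPair (R : Set (Rule σ V)) (cp : Term σ V × Term σ V) : Prop :=
  ∃ r₁ r₂ r₁' r₂' : Rule σ V, r₁' ∈ R ∧ r₂' ∈ R ∧
    IsVariantOf r₁' r₁ ∧ IsVariantOf r₂' r₂ ∧
    (∀ x : V, x ∈ RuleVars r₁ → x ∉ RuleVars r₂) ∧
    ∃ (π : List ℕ) (u' : Term σ V),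
      r₂.lhs.subtermAt π = some u' ∧ ¬ u'.isVar ∧
      (π = [] → ¬ IsVariantOf r₁ r₂) ∧
      ∃ μ : V → Term σ V, IsMGU μ r₁.lhs u' ∧
        ∃ w : Term σ V,
          (Term.subst μ r₂.lhs).replaceAt π (Term.subst μ r₁.rhs) = some w ∧
          cp = (w, Term.subst μ r₂.rhs)

/-- `R` is non-overlapping iff it has no critical pairs. -/
def NonOverlapping (R : Set (Rule σ V)) : Prop := ∀ cp, ¬ CriticalPair R cp

/-- An innermost critical overlay: a critical pair at the root position whose
critical peak consists of two innermost rewrite steps. -/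
def InnermostCriticalOverlay (R : Set (Rule σ V)) (cp : Term σ V × Term σ V) : Prop :=
  ∃ r₁ r₂ r₁' r₂' : Rule σ V, r₁' ∈ R ∧ r₂' ∈ R ∧
    IsVariantOf r₁' r₁ ∧ IsVariantOf r₂' r₂ ∧
    (∀ x : V, x ∈ RuleVars r₁ → x ∉ RuleVars r₂) ∧
    ¬ IsVariantOf r₁ r₂ ∧
    ∃ μ : V → Term σ V, IsMGU μ r₁.lhs r₂.lhs ∧
      IsInnermostRedex R (Term.subst μ r₂.lhs) ∧
      cp = (Term.subst μ r₁.rhs, Term.subst μ r₂.rhs)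

/-! ## Positions with defined symbols and structural dependency chains -/

/-- Strict prefix order on positions: `PosGT τ π` iff `τ > π`,
i.e. `∃ π' ≠ ε, π π' = τ`. -/
def PosGT (τ π : List ℕ) : Prop := ∃ π' : List ℕ, π' ≠ [] ∧ π ++ π' = τ

/-- `PosD(t)`: positions of `t` with defined root symbol. -/
def PosD (R : Set (Rule σ V)) (t : Term σ V) : Set (List ℕ) :=
  { π | ∃ u, t.subtermAt π = some u ∧ HasDefinedRoot R u }

/-- Structural dependency chain `⟨π₁,…,πₖ⟩` for `t`: positions in `PosD(t)`
with `π₁ > … > πₖ`. -/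
def SDChain (R : Set (Rule σ V)) (t : Term σ V) (c : List (List ℕ)) : Prop :=
  (∀ π ∈ c, π ∈ PosD R t) ∧ c.Chain' PosGT

/-- Maximal structural dependency chains: `MSDC R t c` iff `c` is a maximal
structural dependency chain for `t`. -/
def MSDC (R : Set (Rule σ V)) (t : Term σ V) (c : List (List ℕ)) : Prop :=
  SDChain R t c ∧
    ((c = [] ∧ PosD R t = ∅) ∨
      ∃ (π₁ : List ℕ) (rest : List (List ℕ)), c = π₁ :: rest ∧
        ∀ π ∈ PosD R t, ¬ PosGT π π₁ ∧ (PosGT π₁ π → π ∈ rest))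

/-! ## Sharp terms, dependency tuples -/

/-- Extended signature: base symbols, sharp symbols `f#`, compound symbols `Com_n`. -/
inductive SharpSym (σ : Type) : Type where
  | base : σ → SharpSym σ
  | sharp : σ → SharpSym σ
  | com : ℕ → SharpSym σ

mutual
  def Term.embed : Term σ V → Term (SharpSym σ) V
    | Term.var x => Term.var x
    | Term.fn f ts => Term.fn (SharpSym.base f) (Term.embedList ts)
  def Term.embedList : List (Term σ V) → List (Term (SharpSym σ) V)
    | [] => []
    | t :: ts => Term.embed t :: Term.embedList ts
end

open Classical in
/-- `t#`: mark the root of `t` with its sharp symbol (if defined). -/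
noncomputable def Term.sharp (R : Set (Rule σ V)) : Term σ V → Term (SharpSym σ) V
  | Term.var x => Term.var x
  | Term.fn f ts =>
    if Defined R f then Term.fn (SharpSym.sharp f) (Term.embedList ts)
    else Term.fn (SharpSym.base f) (Term.embedList ts)

open Classical in
/-- Sharping on terms over the extended signature: for `t = f(…)` with `f` a
defined (base) symbol of `R`, mark the root; otherwise `t# = t`. -/
noncomputable def sharpC (R : Set (Rule σ V)) : Term (SharpSym σ) V → Term (SharpSym σ) V
  | Term.fn (SharpSym.base f) ts =>
    if Defined R f then Term.fn (SharpSym.sharp f) ts else Term.fn (SharpSym.base f) ts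
  | t => t

def liftRule (r : Rule σ V) : Rule (SharpSym σ) V :=
  { lhs := r.lhs.embed, rhs := r.rhs.embed }

def liftRules (R : Set (Rule σ V)) : Set (Rule (SharpSym σ) V) := liftRule '' R

/-- The dependency tuple `ℓ# → Com_k(u₁#,…,uₖ#)` built from subterms `u₁,…,uₖ`
of the right-hand side. -/
noncomputable def mkDT (R : Set (Rule σ V)) (ρ : Rule σ V) (us : List (Term σ V)) :
    Rule (SharpSym σ) V :=
  { lhs := Term.sharp R ρ.lhs,
    rhs := Term.fn (SharpSym.com us.length) (us.map (Term.sharp R)) }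

/-- `DTpar(ℓ → r)`: one dependency tuple per maximal structural dependency chain. -/
def DTparRule (R : Set (Rule σ V)) (ρ : Rule σ V) : Set (Rule (SharpSym σ) V) :=
  { d | ∃ (c : List (List ℕ)) (us : List (Term σ V)),
      MSDC R ρ.rhs c ∧
      List.Forall₂ (fun π u => ρ.rhs.subtermAt π = some u) c us ∧
      d = mkDT R ρ us }

/-- `DTpar(R)`. -/
def DTparSet (R : Set (Rule σ V)) : Set (Rule (SharpSym σ) V) :=
  ⋃ ρ ∈ R, DTparRule R ρ

/-! ## Chain trees and Cplx -/

/-- A (possibly infinite, finitely branching) tree whose nodes (addressed by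
paths) are labelled with a dependency tuple and a substitution; the child at
direction `i` corresponds to argument `i` of the `Com` symbol. -/
structure ChainTree (σ V : Type) where
  label : List ℕ → Option (Rule (SharpSym σ) V × (V → Term (SharpSym σ) V))

/-- `T` is a `(D,R)`-chain tree for the sharp term `t`. -/
def IsChainTree (D R : Set (Rule (SharpSym σ) V)) (T : ChainTree σ V)
    (t : Term (SharpSym σ) V) : Prop :=
  (∃ r ν, T.label [] = some (r, ν) ∧ Term.subst ν r.lhs = t) ∧
  (∀ (p : List ℕ) (i : ℕ), T.label (p ++ [i]) ≠ none → T.label p ≠ none) ∧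
  (∀ (p : List ℕ) (r : Rule (SharpSym σ) V) (ν : V → Term (SharpSym σ) V),
    T.label p = some (r, ν) →
      r ∈ D ∧ NormalForm R (Term.subst ν r.lhs) ∧
      ∀ (i : ℕ) (r' : Rule (SharpSym σ) V) (δ : V → Term (SharpSym σ) V),
        T.label (p ++ [i]) = some (r', δ) →
          ∃ (m : ℕ) (vs : List (Term (SharpSym σ) V)),
            r.rhs = Term.fn (SharpSym.com m) vs ∧
            ∃ v, vs[i]? = some v ∧
              Relation.ReflTransGen (InnermostRewrite R)
                (Term.subst ν v) (Term.subst δ r'.lhs))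

/-- `|T|_S`: the number of nodes of `T` labelled with a DT from `S`. -/
noncomputable def treeCount (T : ChainTree σ V) (S : Set (Rule (SharpSym σ) V)) : ℕ∞ :=
  Set.encard { p : List ℕ | ∃ r ν, T.label p = some (r, ν) ∧ r ∈ S }

/-- `Cplx⟨D,S,R⟩(t)`: the supremum of `|T|_S` over all `(D,R)`-chain trees `T`
for `t` (`0` if there is no chain tree). -/
noncomputable def Cplx (D S R : Set (Rule (SharpSym σ) V))
    (t : Term (SharpSym σ) V) : ℕ∞ :=
  sSup { c : ℕ∞ | ∃ T : ChainTree σ V, IsChainTree D R T t ∧ c = treeCount T S }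

/-- `irc⟨D,S,R⟩(n)`: runtime complexity of a DT problem. -/
noncomputable def ircDTP (D S : Set (Rule (SharpSym σ) V)) (R : Set (Rule σ V))
    (n : ℕ) : ℕ∞ :=
  sSup { c : ℕ∞ | ∃ t : Term σ V, BasicTerm R t ∧ t.size ≤ n ∧
    c = Cplx D S (liftRules R) (Term.sharp R t) }

/-! ## Relative rewriting -/

/-- An innermost rewrite step using a rule from `X`, with innermost-ness
relative to the whole system `W`. -/
def InnermostRewriteSub (W X : Set (Rule σ V)) (s t : Term σ V) : Prop :=
  ∃ π, ∃ r ∈ X, ∃ θ : V → Term σ V,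
    s.subtermAt π = some (Term.subst θ r.lhs) ∧
    IsInnermostRedex W (Term.subst θ r.lhs) ∧
    s.replaceAt π (Term.subst θ r.rhs) = some t

/-- Innermost relative rewriting `→i_{A/B}`:
`s →B* s' →A s'' →B* t`, all steps innermost wrt `A ∪ B`. -/
def RelInnermost (A B : Set (Rule σ V)) (s t : Term σ V) : Prop :=
  ∃ s' s'' : Term σ V,
    Relation.ReflTransGen (InnermostRewriteSub (A ∪ B) B) s s' ∧
    InnermostRewriteSub (A ∪ B) A s' s'' ∧
    Relation.ReflTransGen (InnermostRewriteSub (A ∪ B) B) s'' t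

/-- Innermost runtime complexity of a relative TRS `A/B`. -/
noncomputable def ircRel (A B : Set (Rule σ V)) (n : ℕ) : ℕ∞ :=
  sSup { d : ℕ∞ | ∃ t : Term σ V, BasicTerm (A ∪ B) t ∧ t.size ≤ n ∧
    d = Dh (RelInnermost A B) t }

/-! ## Dependency tuples (abstract DT problems) -/

inductive IsBaseTerm : Term (SharpSym σ) V → Prop
  | var (x : V) : IsBaseTerm (Term.var x)
  | fn (f : σ) (ts : List (Term (SharpSym σ) V)) :
      (∀ t ∈ ts, IsBaseTerm t) → IsBaseTerm (Term.fn (SharpSym.base f) ts)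

def IsSharpTerm (t : Term (SharpSym σ) V) : Prop :=
  ∃ (f : σ) (args : List (Term (SharpSym σ) V)),
    t = Term.fn (SharpSym.sharp f) args ∧ ∀ a ∈ args, IsBaseTerm a

/-- A dependency tuple: a rule `s# → Com_n(t₁#,…,tₙ#)`. -/
def IsDT (r : Rule (SharpSym σ) V) : Prop :=
  IsSharpTerm r.lhs ∧
    ∃ (n : ℕ) (ts : List (Term (SharpSym σ) V)),
      r.rhs = Term.fn (SharpSym.com n) ts ∧ ts.length = n ∧ ∀ t ∈ ts, IsSharpTerm t

/-! ## Argument normal forms -/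

/-- Argument normal form: a variable, or a term all of whose direct arguments
are normal forms. -/
def ArgNF (R : Set (Rule σ V)) (t : Term σ V) : Prop :=
  (∃ x, t = Term.var x) ∨ ∃ f ts, t = Term.fn f ts ∧ ∀ u ∈ ts, NormalForm R u

/-- A parallel-innermost step all of whose rewrites are at positions strictly
below the root. -/
def ParInnermostBelow (R : Set (Rule σ V)) (s t : Term σ V) : Prop :=
  ParInnermost R s t ∧ ¬ IsInnermostRedex R s

/-- `b` is a maximal parallel argument normal form of `u`. -/
noncomputable def MaxANF (R : Set (Rule σ V)) (u b : Term σ V) : Prop :=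
  ArgNF R b ∧ Relation.ReflTransGen (ParInnermostBelow R) u b ∧
    ∀ u', ArgNF R u' → Relation.ReflTransGen (ParInnermostBelow R) u u' →
      Dh (ParInnermost R) u' ≤ Dh (ParInnermost R) b

/-! ## Many-sorted type assignments -/

/-- Well-typedness of a term wrt a sort set `St`, a type assignment `arty`
(argument sorts and result sort for each symbol) and variable typing `vty`. -/
inductive WellTyped {τ : Type} (St : Type) (arty : τ → List St × St) (vty : V → St) :
    Term τ V → St → Prop
  | var (x : V) : WellTyped St arty vty (Term.var x) (vty x)
  | fn (f : τ) (ts : List (Term τ V)) :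
      ts.length = (arty f).1.length →
      (∀ p ∈ ts.zip (arty f).1, WellTyped St arty vty p.1 p.2) →
      WellTyped St arty vty (Term.fn f ts) (arty f).2

/-- A strict total order on positions extending the strict prefix order. -/
def TotalExtOfPrefix (gt' : List ℕ → List ℕ → Prop) : Prop :=
  (∀ π τ, PosGT π τ → gt' π τ) ∧
  (∀ π τ ρ, gt' π τ → gt' τ ρ → gt' π ρ) ∧
  (∀ π τ, gt' π τ → ¬ gt' τ π) ∧
  (∀ π τ, π ≠ τ → gt' π τ ∨ gt' τ π)

/-!
If every right-hand side has exactly one maximal structural dependency chain, its defined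
positions are pairwise prefix-comparable: two incomparable ones would extend to two maximal
chains with different heads. Call a term's redex positions a chain if they are pairwise
prefix-comparable. This holds for basic terms and is preserved by innermost steps: the new
redexes lie at defined positions of the contracted right-hand side (the matching substitution of
an innermost redex only supplies normal forms), and the surviving ones lie above the contracted
redex. When the redex positions form a chain, the contracted innermost redex is the deepest one
and every subterm beside its path is a normal form, so the innermost step is a parallel-innermost
step. Conversely, every parallel-innermost step is a nonempty innermost derivation. Hence both
relations have the same derivation height on basic terms.
-/

namespace Term

lemma subst_fn (θ : V → Term σ V) (f : σ) (ts : List (Term σ V)) :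
    subst θ (fn f ts) = fn f (ts.map (subst θ)) := by
  suffices h : ∀ ts : List (Term σ V), substList θ ts = ts.map (subst θ) by
    rw [subst, h]
  intro ts
  induction ts with
  | nil => rfl
  | cons t ts ih => rw [substList, ih, List.map_cons]

lemma size_le_sizeList {u : Term σ V} : ∀ {ts : List (Term σ V)}, u ∈ ts → u.size ≤ sizeList ts
  | _ :: _, .head _ => by rw [sizeList]; omega
  | _ :: _, .tail _ h => by rw [sizeList]; have := size_le_sizeList h; omega

@[simp] lemma subtermAt_nil (t : Term σ V) : t.subtermAt [] = some t := by
  cases t <;> rfl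

lemma subtermAt_fn_cons (f : σ) (ts : List (Term σ V)) (i : ℕ) (p : List ℕ) :
    (fn f ts).subtermAt (i :: p) = ts[i]?.bind (·.subtermAt p) := by
  simp only [subtermAt]
  cases ts[i]? <;> rfl

lemma subtermAt_cons_eq_some {t w : Term σ V} {i : ℕ} {p : List ℕ} :
    t.subtermAt (i :: p) = some w ↔
      ∃ f ts u, t = fn f ts ∧ ts[i]? = some u ∧ u.subtermAt p = some w := by
  cases t with
  | var x => simp [subtermAt]
  | fn f ts => simp [subtermAt_fn_cons, Option.bind_eq_some_iff]

lemma subtermAt_append (t : Term σ V) (p q : List ℕ) :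
    t.subtermAt (p ++ q) = (t.subtermAt p).bind (·.subtermAt q) := by
  induction p generalizing t with
  | nil => simp
  | cons i p ih =>
    cases t with
    | var x => rfl
    | fn f ts =>
      simp only [List.cons_append, subtermAt_fn_cons, Option.bind_assoc, ih]

lemma length_lt_size_of_subtermAt {t u : Term σ V} {p : List ℕ}
    (h : t.subtermAt p = some u) : p.length < t.size := by
  induction p generalizing t with
  | nil => cases t <;> simp [size]
  | cons i p ih =>
    obtain ⟨f, ts, u₀, rfl, hu₀, h⟩ := subtermAt_cons_eq_some.mp h
    have := size_le_sizeList (List.mem_of_getElem? hu₀)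
    have := ih h
    simp only [size, List.length_cons]
    omega

lemma subtermAt_subst (θ : V → Term σ V) {t u : Term σ V} {p : List ℕ}
    (h : t.subtermAt p = some u) : (subst θ t).subtermAt p = some (subst θ u) := by
  induction p generalizing t with
  | nil => simp_all
  | cons i p ih =>
    obtain ⟨f, ts, u₀, rfl, hu₀, h⟩ := subtermAt_cons_eq_some.mp h
    simp [subst_fn, subtermAt_fn_cons, hu₀, ih h]

lemma subtermAt_subst_eq_some (θ : V → Term σ V) {t w : Term σ V} {p : List ℕ}
    (h : (subst θ t).subtermAt p = some w) :
    (∃ ρ q x, p = ρ ++ q ∧ t.subtermAt ρ = some (var x) ∧ (θ x).subtermAt q = some w) ∨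
      ∃ u, t.subtermAt p = some u ∧ ¬ u.isVar ∧ w = subst θ u := by
  cases t with
  | var x => exact Or.inl ⟨[], p, x, rfl, rfl, h⟩
  | fn f ts =>
    cases p with
    | nil =>
      simp only [subtermAt_nil, Option.some.injEq] at h
      exact Or.inr ⟨fn f ts, rfl, by rintro ⟨_, ⟨⟩⟩, h.symm⟩
    | cons i p =>
      rw [subst_fn, subtermAt_fn_cons, List.getElem?_map] at h
      obtain ⟨u₀, hu₀, h⟩ : ∃ u₀, ts[i]? = some u₀ ∧ (subst θ u₀).subtermAt p = some w := by
        simpa [Option.bind_eq_some_iff] using h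
      rcases subtermAt_subst_eq_some θ h with ⟨ρ, q, x, rfl, hx, hw⟩ | ⟨u, hu, hu_var, rfl⟩
      · exact Or.inl ⟨i :: ρ, q, x, rfl, by simp [subtermAt_fn_cons, hu₀, hx], hw⟩
      · exact Or.inr ⟨u, by simp [subtermAt_fn_cons, hu₀, hu], hu_var, rfl⟩

lemma varIn_of_subtermAt {t : Term σ V} {x : V} {p : List ℕ}
    (h : t.subtermAt p = some (var x)) : VarIn x t := by
  induction p generalizing t with
  | nil => simp only [subtermAt_nil, Option.some.injEq] at h; exact h ▸ VarIn.var
  | cons i p ih =>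
    obtain ⟨f, ts, u₀, rfl, hu₀, h⟩ := subtermAt_cons_eq_some.mp h
    exact VarIn.fn (List.mem_of_getElem? hu₀) (ih h)

lemma VarIn.exists_subtermAt {x : V} {t : Term σ V} (h : VarIn x t) :
    ∃ p, t.subtermAt p = some (Term.var x) := by
  induction h with
  | var => exact ⟨[], subtermAt_nil _⟩
  | @fn f ts u hu _ ih =>
    obtain ⟨p, hp⟩ := ih
    obtain ⟨i, hi, rfl⟩ := List.mem_iff_getElem.mp hu
    exact ⟨i :: p, by simp [subtermAt_fn_cons, hi, hp]⟩

@[simp] lemma replaceAt_nil (t v : Term σ V) : t.replaceAt [] v = some v := by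
  cases t <;> rfl

lemma replaceAt_cons_eq_some {t v t' : Term σ V} {i : ℕ} {p : List ℕ} :
    t.replaceAt (i :: p) v = some t' ↔
      ∃ f ts u u', t = fn f ts ∧ ts[i]? = some u ∧ u.replaceAt p v = some u' ∧
        t' = fn f (ts.set i u') := by
  cases t with
  | var x => simp [replaceAt]
  | fn f ts =>
    simp only [replaceAt]
    cases hu : ts[i]? with
    | none => simp [hu]
    | some u =>
      cases hu' : u.replaceAt p v with
      | none => simp [hu, hu']
      | some u' => simp [hu, hu', eq_comm]

lemma subtermAt_replaceAt_self {t v t' : Term σ V} {p : List ℕ}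
    (h : t.replaceAt p v = some t') : t'.subtermAt p = some v := by
  induction p generalizing t t' with
  | nil => simp_all
  | cons i p ih =>
    obtain ⟨f, ts, u, u', rfl, hu, hu', rfl⟩ := replaceAt_cons_eq_some.mp h
    have hi : i < ts.length := (List.getElem?_eq_some_iff.mp hu).1
    simp [subtermAt_fn_cons, hi, ih hu']

lemma subtermAt_replaceAt_of_not_prefix {t v t' : Term σ V} {p q : List ℕ}
    (h : t.replaceAt p v = some t') (hpq : ¬ p <+: q) (hqp : ¬ q <+: p) :
    t'.subtermAt q = t.subtermAt q := by
  induction p generalizing t t' q with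
  | nil => exact absurd List.nil_prefix hpq
  | cons i p ih =>
    obtain ⟨f, ts, u, u', rfl, hu, hu', rfl⟩ := replaceAt_cons_eq_some.mp h
    cases q with
    | nil => exact absurd List.nil_prefix hqp
    | cons j q =>
      simp only [List.cons_prefix_cons, not_and] at hpq hqp
      by_cases hij : i = j
      · subst hij
        obtain ⟨hi, rfl⟩ := List.getElem?_eq_some_iff.mp hu
        simp [subtermAt_fn_cons, hi, ih hu' (hpq rfl) (hqp rfl)]
      · simp [subtermAt_fn_cons, List.getElem?_set_ne hij]

end Term

open Term Relation

instance {α : Type*} : Std.Refl (fun p q : List α => p <+: q) := ⟨List.prefix_refl⟩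

variable {R : Set (Rule σ V)}

def RedexPos (R : Set (Rule σ V)) (t : Term σ V) : Set (List ℕ) :=
  { p | ∃ u, t.subtermAt p = some u ∧ IsRedex R u }

lemma append_mem_redexPos {t u : Term σ V} {p q : List ℕ} (h : t.subtermAt p = some u) :
    p ++ q ∈ RedexPos R t ↔ q ∈ RedexPos R u := by
  simp [RedexPos, subtermAt_append, h]

lemma cons_mem_redexPos_fn {f : σ} {ts : List (Term σ V)} {i : ℕ} {u : Term σ V}
    (hi : ts[i]? = some u) {q : List ℕ} :
    i :: q ∈ RedexPos R (fn f ts) ↔ q ∈ RedexPos R u := by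
  simp [RedexPos, subtermAt_fn_cons, hi]

lemma normalForm_of_redexPos_eq_empty {t : Term σ V} (h : RedexPos R t = ∅) :
    NormalForm R t := by
  rintro ⟨u, p, r, hr, θ, hsub, -⟩
  exact Set.eq_empty_iff_forall_notMem.mp h p ⟨_, hsub, r, hr, θ, rfl⟩

lemma IsRedex.hasDefinedRoot (hR : ∀ r ∈ R, ¬ r.lhs.isVar) {w : Term σ V} (h : IsRedex R w) :
    HasDefinedRoot R w := by
  obtain ⟨r, hr, θ, rfl⟩ := h
  cases hl : r.lhs with
  | var x => exact absurd ⟨x, hl⟩ (hR r hr)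
  | fn g args => exact ⟨g, args.map (subst θ), subst_fn θ g args, r, hr, args, hl⟩

lemma hasDefinedRoot_of_subst {θ : V → Term σ V} {u : Term σ V} (hu : ¬ u.isVar)
    (h : HasDefinedRoot R (subst θ u)) : HasDefinedRoot R u := by
  obtain ⟨g, ws, hg, hdef⟩ := h
  cases u with
  | var x => exact absurd ⟨x, rfl⟩ hu
  | fn g' us =>
    rw [subst_fn, fn.injEq] at hg
    exact ⟨g', us, rfl, hg.1 ▸ hdef⟩

lemma ConsTerm.of_subtermAt {t u : Term σ V} {p : List ℕ} (ht : ConsTerm R t)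
    (h : t.subtermAt p = some u) : ConsTerm R u := by
  induction p generalizing t with
  | nil => simp_all
  | cons i p ih =>
    obtain ⟨f, ts, u₀, rfl, hu₀, h⟩ := subtermAt_cons_eq_some.mp h
    cases ht with
    | fn _ _ _ hts => exact ih (hts u₀ (List.mem_of_getElem? hu₀)) h

lemma ConsTerm.not_hasDefinedRoot {u : Term σ V} (hu : ConsTerm R u) :
    ¬ HasDefinedRoot R u := by
  rintro ⟨g, ws, rfl, hg⟩
  cases hu with
  | fn _ _ hdef _ => exact hdef hg

lemma redexPos_subset_of_basicTerm (hR : ∀ r ∈ R, ¬ r.lhs.isVar) {t : Term σ V}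
    (ht : BasicTerm R t) : RedexPos R t ⊆ {[]} := by
  obtain ⟨f, ts, rfl, -, hts⟩ := ht
  rintro (_ | ⟨i, p⟩) ⟨w, hw, hred⟩
  · rfl
  · obtain ⟨_, _, u, hfn, hu, hw⟩ := subtermAt_cons_eq_some.mp hw
    obtain ⟨rfl, rfl⟩ := fn.inj hfn
    exact absurd (hred.hasDefinedRoot hR)
      ((hts u (List.mem_of_getElem? hu)).of_subtermAt hw).not_hasDefinedRoot

lemma not_isRedex_of_varIn_lhs {l : Term σ V} (hl : ¬ l.isVar) {θ : V → Term σ V}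
    (hin : IsInnermostRedex R (subst θ l)) {x : V} (hx : VarIn x l) {q : List ℕ}
    {w : Term σ V} (hw : (θ x).subtermAt q = some w) : ¬ IsRedex R w := by
  obtain ⟨p, hp⟩ := hx.exists_subtermAt
  have hp_ne : p ≠ [] := by
    rintro rfl
    exact hl ⟨x, by simpa using hp⟩
  refine hin.2 (p ++ q) (by simp [hp_ne]) w ?_
  rw [subtermAt_append, subtermAt_subst θ hp]
  exact hw

lemma mem_posD_of_mem_redexPos_subst_rhs (hR : IsWfTRS R) {r : Rule σ V} (hr : r ∈ R)
    {θ : V → Term σ V} (hin : IsInnermostRedex R (subst θ r.lhs)) {ρ : List ℕ}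
    (hρ : ρ ∈ RedexPos R (subst θ r.rhs)) : ρ ∈ PosD R r.rhs := by
  obtain ⟨w, hw, hred⟩ := hρ
  rcases subtermAt_subst_eq_some θ hw with ⟨ρ₀, q, x, -, hx, hq⟩ | ⟨u, hu, hu_var, rfl⟩
  · exact absurd hred
      (not_isRedex_of_varIn_lhs (hR.2.1 r hr) hin (hR.2.2 r hr x (varIn_of_subtermAt hx)) hq)
  · exact ⟨u, hu, hasDefinedRoot_of_subst hu_var (hred.hasDefinedRoot hR.2.1)⟩

lemma mem_redexPos_of_replaceAt_subst_rhs (hR : IsWfTRS R) {r : Rule σ V} (hr : r ∈ R)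
    {θ : V → Term σ V} (hin : IsInnermostRedex R (subst θ r.lhs)) {s t : Term σ V}
    {π q : List ℕ} (hrep : s.replaceAt π (subst θ r.rhs) = some t) (hq : q ∈ RedexPos R t) :
    q <+: π ∨ (∃ ρ ∈ PosD R r.rhs, q = π ++ ρ) ∨
      (q ∈ RedexPos R s ∧ ¬ π <+: q ∧ ¬ q <+: π) := by
  by_cases hqπ : q <+: π
  · exact Or.inl hqπ
  by_cases hπq : π <+: q
  · obtain ⟨ρ, rfl⟩ := hπq
    have hρ := (append_mem_redexPos (subtermAt_replaceAt_self hrep)).mp hq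
    exact Or.inr (Or.inl ⟨ρ, mem_posD_of_mem_redexPos_subst_rhs hR hr hin hρ, rfl⟩)
  · refine Or.inr (Or.inr ⟨?_, hπq, hqπ⟩)
    show ∃ u, _ ∧ _
    rw [← subtermAt_replaceAt_of_not_prefix hrep hπq hqπ]
    exact hq

lemma posGT_iff {τ π : List ℕ} : PosGT τ π ↔ π <+: τ ∧ π ≠ τ := by
  constructor
  · rintro ⟨e, he, rfl⟩
    exact ⟨π.prefix_append e, by simpa using he.symm⟩
  · rintro ⟨⟨e, rfl⟩, hne⟩
    exact ⟨e, by rintro rfl; simp at hne, rfl⟩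

lemma posGT_take_take {d : List ℕ} {a b : ℕ} (hab : a < b) (hb : b ≤ d.length) :
    PosGT (d.take b) (d.take a) := by
  refine posGT_iff.mpr ⟨?_, fun h => ?_⟩
  · simpa [List.take_take, min_eq_left hab.le] using List.take_prefix a (d.take b)
  · have := congrArg List.length h
    simp only [List.length_take] at this
    omega

lemma exists_maximal_mem_posD {t : Term σ V} {p : List ℕ} (hp : p ∈ PosD R t) :
    ∃ d ∈ PosD R t, p <+: d ∧ ∀ π ∈ PosD R t, ¬ PosGT π d := by
  classical
  let P k := ∃ d ∈ PosD R t, p <+: d ∧ d.length = k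
  have hlen : ∀ d ∈ PosD R t, d.length < t.size := fun d ⟨_, hd, _⟩ =>
    length_lt_size_of_subtermAt hd
  obtain ⟨d, hd, hpd, hd_len⟩ : P (Nat.findGreatest P t.size) :=
    Nat.findGreatest_spec (hlen p hp).le ⟨p, hp, List.prefix_refl p, rfl⟩
  refine ⟨d, hd, hpd, ?_⟩
  rintro π hπ ⟨e, he, rfl⟩
  refine Nat.findGreatest_is_greatest (P := P) ?_ (hlen _ hπ).le
    ⟨d ++ e, hπ, hpd.trans (d.prefix_append e), rfl⟩
  simp [← hd_len, List.length_pos_iff.mpr he]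

lemma exists_msdc_cons {t : Term σ V} {d : List ℕ} (hd : d ∈ PosD R t)
    (hmax : ∀ π ∈ PosD R t, ¬ PosGT π d) : ∃ rest, MSDC R t (d :: rest) := by
  classical
  let rest := ((List.range d.length).reverse.map d.take).filter (· ∈ PosD R t)
  have hrest : ∀ π, π ∈ rest ↔ (∃ k < d.length, d.take k = π) ∧ π ∈ PosD R t := by
    simp [rest]
  refine ⟨rest, ⟨?_, ?_⟩, Or.inr ⟨d, rest, rfl, fun π hπ => ⟨hmax π hπ, fun hdπ => ?_⟩⟩⟩
  · rintro π (_ | ⟨_, hπ⟩)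
    exacts [hd, ((hrest π).mp hπ).2]
  · refine (List.pairwise_cons.mpr ⟨fun π hπ => ?_, ?_⟩).isChain
    · obtain ⟨⟨k, hk, rfl⟩, -⟩ := (hrest π).mp hπ
      simpa using posGT_take_take hk le_rfl
    · refine List.Pairwise.filter _ ?_
      rw [List.pairwise_map, List.pairwise_reverse]
      exact List.pairwise_lt_range.imp_of_mem fun _ hb hab =>
        posGT_take_take hab (List.mem_range.mp hb).le
  · obtain ⟨hπd, hne⟩ := posGT_iff.mp hdπ
    refine (hrest π).mpr ⟨⟨π.length, ?_, (List.prefix_iff_eq_take.mp hπd).symm⟩, hπ⟩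
    exact lt_of_le_of_ne hπd.length_le fun h => hne (hπd.eq_of_length h)

lemma isChain_posD_of_existsUnique_msdc {t : Term σ V} (h : ∃! c, MSDC R t c) :
    IsChain (· <+: ·) (PosD R t) := by
  intro p hp q hq _
  obtain ⟨dp, hdp, hpd, hmaxp⟩ := exists_maximal_mem_posD hp
  obtain ⟨dq, hdq, hqd, hmaxq⟩ := exists_maximal_mem_posD hq
  obtain ⟨restp, hcp⟩ := exists_msdc_cons hdp hmaxp
  obtain ⟨restq, hcq⟩ := exists_msdc_cons hdq hmaxq
  obtain rfl : dp = dq := (List.cons.inj (h.unique hcp hcq)).1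
  exact List.prefix_or_prefix_of_prefix hpd hqd

lemma isChain_redexPos_of_innermostRewrite (hR : IsWfTRS R)
    (hOne : ∀ ρ ∈ R, ∃! c : List (List ℕ), MSDC R ρ.rhs c) {s t : Term σ V}
    (hs : IsChain (· <+: ·) (RedexPos R s)) (h : InnermostRewrite R s t) :
    IsChain (· <+: ·) (RedexPos R t) := by
  obtain ⟨π, r, hr, θ, hsub, hin, hrep⟩ := h
  have hπ : π ∈ RedexPos R s := ⟨_, hsub, r, hr, θ, rfl⟩
  have hclass : ∀ q ∈ RedexPos R t, q <+: π ∨ ∃ ρ ∈ PosD R r.rhs, q = π ++ ρ := by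
    intro q hq
    rcases mem_redexPos_of_replaceAt_subst_rhs hR hr hin hrep hq with h | h | ⟨hqs, hπq, hqπ⟩
    exacts [Or.inl h, Or.inr h, (hs.total hqs hπ).elim hqπ hπq |>.elim]
  intro p hp q hq _
  rcases hclass p hp with hpπ | ⟨ρ₁, hρ₁, rfl⟩ <;> rcases hclass q hq with hqπ | ⟨ρ₂, hρ₂, rfl⟩
  · exact List.prefix_or_prefix_of_prefix hpπ hqπ
  · exact Or.inl (hpπ.trans (π.prefix_append ρ₂))
  · exact Or.inr (hqπ.trans (π.prefix_append ρ₁))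
  · simpa using (isChain_posD_of_existsUnique_msdc (hOne r hr)).total hρ₁ hρ₂

lemma isChain_redexPos_of_basicTerm (hR : ∀ r ∈ R, ¬ r.lhs.isVar) {t : Term σ V}
    (ht : BasicTerm R t) : IsChain (· <+: ·) (RedexPos R t) :=
  (Set.subsingleton_singleton.anti (redexPos_subset_of_basicTerm hR ht)).isChain

lemma _root_.List.exists_of_mem_zip_set {α : Type*} {l : List α} {i : ℕ} {a : α} {x : α × α}
    (h : x ∈ l.zip (l.set i a)) : ∃ j, l[j]? = some x.1 ∧ x.2 = if j = i then a else x.1 := by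
  obtain ⟨j, hj, rfl⟩ := List.mem_iff_getElem.mp h
  simp only [List.length_zip, List.length_set, min_self] at hj
  refine ⟨j, by simp [hj], ?_⟩
  simp [List.getElem_set, eq_comm]

lemma ParInnermost.fn_set {f : σ} {ss : List (Term σ V)} {i : ℕ} {a b : Term σ V}
    (ha : ss[i]? = some a) (hab : ParInnermost R a b)
    (hnf : ∀ j u, j ≠ i → ss[j]? = some u → NormalForm R u)
    (hstep : TransGen (InnermostRewrite R) (fn f ss) (fn f (ss.set i b))) :
    ParInnermost R (fn f ss) (fn f (ss.set i b)) := by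
  refine .congr f ss _ hstep (List.length_set ..).symm fun x hx hx_nf => ?_
  obtain ⟨j, hj, hx₂⟩ := List.exists_of_mem_zip_set hx
  split_ifs at hx₂ with hji
  · subst hji
    obtain ⟨x₁, x₂⟩ := x
    obtain rfl : x₁ = a := Option.some.inj (hj.symm.trans ha)
    obtain rfl : x₂ = b := hx₂
    exact hab
  · exact absurd ⟨hx₂.symm, hnf j x.1 hji hj⟩ hx_nf

lemma parInnermost_of_replaceAt {r : Rule σ V} (hr : r ∈ R) {θ : V → Term σ V}
    (hin : IsInnermostRedex R (subst θ r.lhs)) {π : List ℕ} {s t : Term σ V}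
    (hsub : s.subtermAt π = some (subst θ r.lhs))
    (hrep : s.replaceAt π (subst θ r.rhs) = some t)
    (hdeep : ∀ q ∈ RedexPos R s, q <+: π) : ParInnermost R s t := by
  have hstep : InnermostRewrite R s t := ⟨π, r, hr, θ, hsub, hin, hrep⟩
  induction π generalizing s t with
  | nil =>
    simp only [subtermAt_nil, replaceAt_nil, Option.some.injEq] at hsub hrep
    subst hsub hrep
    exact .redex (.single hstep) hin hstep
  | cons i π ih =>
    obtain ⟨f, ss, a, b, rfl, ha, hab, rfl⟩ := replaceAt_cons_eq_some.mp hrep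
    have hsub' : a.subtermAt π = some (subst θ r.lhs) := by
      simpa [subtermAt_fn_cons, ha] using hsub
    refine ParInnermost.fn_set ha (ih hsub' hab (fun q hq => ?_) ⟨π, r, hr, θ, hsub', hin, hab⟩)
      (fun j u hji hj => normalForm_of_redexPos_eq_empty ?_) (.single hstep)
    · exact (List.cons_prefix_cons.mp (hdeep _ ((cons_mem_redexPos_fn ha).mpr hq))).2
    · refine Set.eq_empty_iff_forall_notMem.mpr fun q hq => hji ?_
      exact (List.cons_prefix_cons.mp (hdeep _ ((cons_mem_redexPos_fn hj).mpr hq))).1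

lemma parInnermost_of_innermostRewrite {s t : Term σ V}
    (hs : IsChain (· <+: ·) (RedexPos R s)) (h : InnermostRewrite R s t) :
    ParInnermost R s t := by
  obtain ⟨π, r, hr, θ, hsub, hin, hrep⟩ := h
  refine parInnermost_of_replaceAt hr hin hsub hrep fun q hq => ?_
  rcases hs.total hq ⟨_, hsub, r, hr, θ, rfl⟩ with hqπ | ⟨ρ, rfl⟩
  · exact hqπ
  · obtain ⟨w, hw, hred⟩ := (append_mem_redexPos hsub).mp hq
    by_cases hρ : ρ = []
    · simp [hρ]
    · exact absurd hred (hin.2 ρ hρ w hw)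

lemma ParInnermost.transGen {s t : Term σ V} (h : ParInnermost R s t) :
    TransGen (InnermostRewrite R) s t := by
  cases h with
  | redex h _ _ => exact h
  | congr _ _ _ h _ _ => exact h

section DerivationHeight

variable {α : Type} {r r₁ r₂ : α → α → Prop}

lemma iterRel_add {m n : ℕ} {a b c : α} (h₁ : iterRel r m a b) (h₂ : iterRel r n b c) :
    iterRel r (m + n) a c := by
  induction m generalizing a with
  | zero => obtain rfl : a = b := h₁; simpa using h₂
  | succ m ih =>
    obtain ⟨a', ha, h₁⟩ := h₁
    rw [Nat.add_right_comm]
    exact ⟨a', ha, ih h₁⟩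

lemma exists_iterRel_of_transGen {a b : α} (h : TransGen r a b) :
    ∃ k, 0 < k ∧ iterRel r k a b := by
  induction h with
  | single h => exact ⟨1, one_pos, _, h, rfl⟩
  | tail _ hbc ih =>
    obtain ⟨k, hk, hab⟩ := ih
    exact ⟨k + 1, k.succ_pos, iterRel_add hab ⟨_, hbc, rfl⟩⟩

lemma exists_iterRel_of_le {m n : ℕ} {a c : α} (h : iterRel r m a c) (hnm : n ≤ m) :
    ∃ b, iterRel r n a b := by
  induction n generalizing m a with
  | zero => exact ⟨a, rfl⟩
  | succ n ih =>
    obtain ⟨m, rfl⟩ := Nat.exists_eq_add_of_le' (Nat.zero_lt_of_lt hnm)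
    obtain ⟨a', ha, h⟩ := h
    obtain ⟨b, hb⟩ := ih h (by omega)
    exact ⟨b, a', ha, hb⟩

lemma dh_le_of_forall_iterRel {s : α} (h : ∀ n t, iterRel r₁ n s t → ∃ u, iterRel r₂ n s u) :
    Dh r₁ s ≤ Dh r₂ s := by
  refine sSup_le ?_
  rintro e ⟨n, rfl, t, ht⟩
  obtain ⟨u, hu⟩ := h n t ht
  exact le_sSup ⟨n, rfl, u, hu⟩

lemma dh_le_of_le_transGen (h : ∀ a b, r₁ a b → TransGen r₂ a b) (s : α) :
    Dh r₁ s ≤ Dh r₂ s := by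
  suffices ∀ n {a t}, iterRel r₁ n a t → ∃ m, n ≤ m ∧ iterRel r₂ m a t from
    dh_le_of_forall_iterRel fun n t ht =>
      let ⟨_, hnm, hm⟩ := this n ht
      exists_iterRel_of_le hm hnm
  intro n
  induction n with
  | zero => exact fun h => ⟨0, le_rfl, h⟩
  | succ n ih =>
    rintro a t ⟨b, hab, hbt⟩
    obtain ⟨k, hk, hab⟩ := exists_iterRel_of_transGen (h a b hab)
    obtain ⟨m, hnm, hbt⟩ := ih hbt
    exact ⟨k + m, by omega, iterRel_add hab hbt⟩

lemma dh_le_of_invariant (P : α → Prop) (h : ∀ a b, P a → r₂ a b → P b ∧ r₁ a b) {s : α}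
    (hs : P s) : Dh r₂ s ≤ Dh r₁ s := by
  suffices ∀ n {a t}, P a → iterRel r₂ n a t → iterRel r₁ n a t from
    dh_le_of_forall_iterRel fun n t ht => ⟨t, this n hs ht⟩
  intro n
  induction n with
  | zero => exact fun _ h => h
  | succ n ih =>
    rintro a t ha ⟨b, hab, hbt⟩
    exact ⟨b, (h a b ha hab).2, ih (h a b ha hab).1 hbt⟩

end DerivationHeight

/-- If `|MSDC(r)| = 1` for every rule of `R`, then
`pirc_R(n) = irc_R(n)` for all `n`. -/
theorem pirc_eq_irc_of_unique_msdc
    {σ V : Type} [Finite σ] (R : Set (Rule σ V)) (hR : IsWfTRS R)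
    (hOne : ∀ ρ ∈ R, ∃! c : List (List ℕ), MSDC R ρ.rhs c) :
    ∀ n : ℕ, pirc R n = irc R n := by
  have hDh : ∀ t, BasicTerm R t → Dh (ParInnermost R) t = Dh (InnermostRewrite R) t :=
    fun t ht => le_antisymm (dh_le_of_le_transGen (fun _ _ => ParInnermost.transGen) t)
      (dh_le_of_invariant (fun s => IsChain (· <+: ·) (RedexPos R s))
        (fun _ _ hs hst => ⟨isChain_redexPos_of_innermostRewrite hR hOne hs hst,
          parInnermost_of_innermostRewrite hs hst⟩)
        (isChain_redexPos_of_basicTerm hR.2.1 ht))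
  intro n
  simp only [pirc, irc]
  congr 1
  ext d
  exact exists_congr fun t => and_congr_right fun ht => and_congr_right fun _ => by rw [hDh t ht]

end ParallelComplexity
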